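/- arXiv:1508.06796 — 2 statements merged into one kernel-verified Lean document; each statement's English description precedes it below -/
import Mathlib

section
/- Let H be a real Hilbert space and (E_n, D_n)_{n∈ℕ} an increasing sequence of closable, positive definite, symmetric bilinear forms on H (i.e., D_n ⊇ D_{n+1} and E_n(f,f) ≤ E_{n+1}(f,f) for f ∈ D_{n+1}). Define E_∞(f,f) = lim_n E_n(f,f) with domain D_∞ = {f ∈ ⋂_n D_n : sup_n E_n(f,f) < ∞}. Then (E_∞, D_∞) is closable on H. -/
open Filter

section Aux
variable {H : Type*} [AddCommGroup H] [Module ℝ H] (B : H → H → ℝ)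

lemma expand_aux
    (hadd : ∀ (a b c : H), B (a + b) c = B a c + B b c)
    (hsmul : ∀ (t : ℝ) (a c : H), B (t • a) c = t * B a c)
    (hsymm : ∀ (a b : H), B a b = B b a)
    (a b : H) (t : ℝ) :
    B (a + t • b) (a + t • b) = B a a + 2*t*B a b + t^2 * B b b := by
  have haddr : ∀ a b c : H, B c (a + b) = B c a + B c b := fun a b c => by
    rw [hsymm, hadd, hsymm a c, hsymm b c]
  have hsmulr : ∀ (t:ℝ) (a c : H), B c (t • a) = t * B c a := fun t a c => by
    rw [hsymm, hsmul, hsymm]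
  rw [hadd, haddr, haddr, hsmul, hsmul, hsmulr, hsmulr, hsymm b a]
  ring

lemma cs_aux
    (hadd : ∀ (a b c : H), B (a + b) c = B a c + B b c)
    (hsmul : ∀ (t : ℝ) (a c : H), B (t • a) c = t * B a c)
    (hsymm : ∀ (a b : H), B a b = B b a)
    (hpos : ∀ f, 0 ≤ B f f)
    (a b : H) : (B a b)^2 ≤ B a a * B b b := by
  have key : ∀ t : ℝ, 0 ≤ B b b * (t*t) + (2*B a b) * t + B a a := fun t => by
    have h := hpos (a + t • b)
    rw [expand_aux B hadd hsmul hsymm a b t] at h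
    nlinarith [h]
  have hd : discrim (B b b) (2*B a b) (B a a) ≤ 0 := discrim_le_zero key
  rw [discrim] at hd
  nlinarith [hd]

lemma tri_aux
    (hadd : ∀ (a b c : H), B (a + b) c = B a c + B b c)
    (hsmul : ∀ (t : ℝ) (a c : H), B (t • a) c = t * B a c)
    (hsymm : ∀ (a b : H), B a b = B b a)
    (hpos : ∀ f, 0 ≤ B f f)
    (x y : H) : B (x+y) (x+y) ≤ B x x + 2*Real.sqrt (B x x * B y y) + B y y := by
  have hcs := cs_aux B hadd hsmul hsymm hpos x y
  have hxy : B x y ≤ Real.sqrt (B x x * B y y) := by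
    have h := Real.sqrt_le_sqrt hcs
    rw [Real.sqrt_sq_eq_abs] at h
    exact (le_abs_self _).trans h
  have he := expand_aux B hadd hsmul hsymm x y 1
  rw [one_smul] at he
  nlinarith [he, hxy]

lemma sub_aux
    (hadd : ∀ (a b c : H), B (a + b) c = B a c + B b c)
    (hsmul : ∀ (t : ℝ) (a c : H), B (t • a) c = t * B a c)
    (hsymm : ∀ (a b : H), B a b = B b a)
    (hpos : ∀ f, 0 ≤ B f f)
    (x y : H) : B (x-y) (x-y) ≤ 2*B x x + 2*B y y := by
  have h1 := expand_aux B hadd hsmul hsymm x y 1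
  rw [one_smul] at h1
  have h2 := expand_aux B hadd hsmul hsymm x y (-1)
  have hxy : x + (-1 : ℝ) • y = x - y := by
    rw [neg_one_smul, ← sub_eq_add_neg]
  rw [hxy] at h2
  have h3 := hpos (x + y)
  nlinarith [h1, h2, h3]
end Aux

/-- A nonnegative quadratic form `Q` with domain `D` is closable if for every sequence in `D`
converging to `0` in norm which is Cauchy with respect to the form, the form values tend
to `0`. -/
def IsClosableForm {H : Type*} [NormedAddCommGroup H] (Q : H → ℝ) (D : Set H) : Prop :=
  ∀ f : ℕ → H, (∀ k, f k ∈ D) →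
    Tendsto (fun k => ‖f k‖) atTop (nhds 0) →
    (∀ ε > (0 : ℝ), ∃ N, ∀ j ≥ N, ∀ k ≥ N, Q (f j - f k) < ε) →
    Tendsto (fun k => Q (f k)) atTop (nhds 0)

theorem stmt_12 {H : Type*} [NormedAddCommGroup H] [InnerProductSpace ℝ H] [CompleteSpace H]
    (E : ℕ → H → H → ℝ) (D : ℕ → Submodule ℝ H)
    (hadd : ∀ n (a b c : H), E n (a + b) c = E n a c + E n b c)
    (hsmul : ∀ n (t : ℝ) (a c : H), E n (t • a) c = t * E n a c)
    (hsymm : ∀ n (a b : H), E n a b = E n b a)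
    (hpos : ∀ n (f : H), 0 ≤ E n f f)
    (hdec : ∀ n, (D (n + 1) : Set H) ⊆ (D n : Set H))
    (hmono : ∀ n (f : H), f ∈ D (n + 1) → E n f f ≤ E (n + 1) f f)
    (hclosable : ∀ n, IsClosableForm (fun f => E n f f) (D n : Set H)) :
    IsClosableForm (fun f => ⨆ n, E n f f)
      {f : H | (∀ n, f ∈ D n) ∧ BddAbove (Set.range fun n => E n f f)} := by
  intro f hf hnorm hcauchy
  have hbddk : ∀ k, BddAbove (Set.range fun n => E n (f k) (f k)) := fun k => (hf k).2
  have hmem : ∀ k n, f k ∈ D n := fun k n => (hf k).1 n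
  -- the ranges of form values of differences are bounded above
  have hbdd_diff : ∀ j k, BddAbove (Set.range fun n => E n (f j - f k) (f j - f k)) := by
    intro j k
    obtain ⟨cj, hcj⟩ := hbddk j
    obtain ⟨ck, hck⟩ := hbddk k
    refine ⟨2*cj + 2*ck, ?_⟩
    rintro x ⟨n, rfl⟩
    have h1 := hcj (Set.mem_range_self (f := fun n => E n (f j) (f j)) n)
    have h2 := hck (Set.mem_range_self (f := fun n => E n (f k) (f k)) n)
    have h3 := sub_aux (E n) (hadd n) (hsmul n) (hsymm n) (hpos n) (f j) (f k)
    simp only at h1 h2 ⊢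
    linarith
  have hE_le_Q : ∀ n j k, E n (f j - f k) (f j - f k) ≤ ⨆ m, E m (f j - f k) (f j - f k) :=
    fun n j k => le_ciSup (hbdd_diff j k) n
  -- each E n is closable, and the sequence is E n-Cauchy
  have htend : ∀ n, Tendsto (fun k => E n (f k) (f k)) atTop (nhds 0) := by
    intro n
    refine hclosable n f (fun k => hmem k n) hnorm ?_
    intro ε hε
    obtain ⟨N, hN⟩ := hcauchy ε hε
    exact ⟨N, fun j hj k hk => lt_of_le_of_lt (hE_le_Q n j k) (hN j hj k hk)⟩
  rw [Metric.tendsto_atTop]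
  intro ε hε
  obtain ⟨N, hN⟩ := hcauchy (ε/2) (by linarith)
  refine ⟨N, fun k hk => ?_⟩
  have hQ0 : (0:ℝ) ≤ ⨆ n, E n (f k) (f k) :=
    le_trans (hpos 0 (f k)) (le_ciSup (hbddk k) 0)
  have hQle : (⨆ n, E n (f k) (f k)) ≤ ε/2 := by
    refine ciSup_le fun n => ?_
    -- bound E n (f k) (f k) by a sequence in j tending to ε/2
    have h1 : Tendsto (fun j => (ε/2) * E n (f j) (f j)) atTop (nhds 0) := by
      simpa using (htend n).const_mul (ε/2)
    have h2 : Tendsto (fun j => Real.sqrt ((ε/2) * E n (f j) (f j))) atTop (nhds 0) := by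
      simpa using h1.sqrt
    have hg : Tendsto
        (fun j => ε/2 + 2 * Real.sqrt ((ε/2) * E n (f j) (f j)) + E n (f j) (f j))
        atTop (nhds (ε/2)) := by
      have := (tendsto_const_nhds (x := ε/2) (f := atTop)).add ((h2.const_mul 2).add (htend n))
      simpa [add_assoc] using this
    refine ge_of_tendsto hg ?_
    filter_upwards [eventually_ge_atTop N] with j hj
    have hdiff : E n (f k - f j) (f k - f j) ≤ ε/2 :=
      le_of_lt (lt_of_le_of_lt (hE_le_Q n k j) (hN k hk j hj))
    have htri := tri_aux (E n) (hadd n) (hsmul n) (hsymm n) (hpos n) (f k - f j) (f j)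
    rw [sub_add_cancel] at htri
    have hs : Real.sqrt (E n (f k - f j) (f k - f j) * E n (f j) (f j))
        ≤ Real.sqrt ((ε/2) * E n (f j) (f j)) :=
      Real.sqrt_le_sqrt (mul_le_mul_of_nonneg_right hdiff (hpos n (f j)))
    linarith
  have : |(⨆ n, E n (f k) (f k)) - 0| < ε := by
    rw [sub_zero, abs_of_nonneg hQ0]
    linarith
  simpa [Real.dist_eq] using this
end

section
/- In the setting of the previous cutoff function: if x is a point of the configuration ξ with x ∈ A_r := U_{2^r} \ U_{2^{r-1}} and y ∈ A_{r-1} ∪ A_r ∪ A_{r+1}, then |d_a(ξ^{x,y}) - d_a(ξ)| ≤ 1/a_{r-1} + 1/a_r + 1/a_{r+1}, where ξ^{x,y} = ξ - δ_x + δ_y is the configuration with the particle at x moved to y. -/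
open scoped BigOperators

/-- The cutoff functional `d_a` of a configuration given by the ordered list of points `x`:
`d_a(ξ) = ∑_{r≥1} ∑_{j ∈ J_{r,ξ}} ((2^r - |x_j|) ∧ 2^{r-1}) / (2^{r-1} a_r)` with
`J_{r,ξ} = {j : j > a_r, x_j ∈ U_{2^r}}` (here `x j` is the (j+1)-st point). -/
noncomputable def dFun (d : ℕ) (a : ℕ → ℝ) (x : ℕ → EuclideanSpace ℝ (Fin d)) : ℝ :=
  ∑' r : ℕ, ∑' j : {j : ℕ | a (r + 1) < ((j : ℝ) + 1) ∧ ‖x j‖ ≤ (2 : ℝ) ^ (r + 1)},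
    min ((2 : ℝ) ^ (r + 1) - ‖x (j : ℕ)‖) ((2 : ℝ) ^ r) / ((2 : ℝ) ^ r * a (r + 1))


/-!
Split `d_a` into shells: the shell `s` contributes `∑_{j ≥ ⌊a_{s+1}⌋} g j`, where `g j` is an
antitone weight (with values in `[0, 1 / a_{s+1}]`) of the nondecreasing sequence of norms.
Moving one particle and re-sorting turns `g` into a sequence `g'` interlacing with it
(`g (j + 1) ≤ g' j ≤ g j`, or the same with `g` and `g'` exchanged), so every tail sum moves by at
most its first term, `1 / a_{s+1}`. A shell with `s + 1 ∉ {r - 1, r, r + 1}` sees the old and the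
new position on the same flat piece of the weight, so the multiset of its weights, hence its
sorted weight sequence, does not change at all.
-/

open Filter Function

section Interlacing

variable {β : Type*} {g g' : ℕ → β} {σ : ℕ ≃ ℕ} {j₀ : ℕ} {v : β}

lemma exists_mem_le_of_lt_card {t : Finset ℕ} {j : ℕ} (h : j < t.card) : ∃ p ∈ t, j ≤ p := by
  obtain ⟨p, hp, hpj⟩ :=
    Finset.exists_mem_notMem_of_card_lt_card (s := Finset.range j) (by simpa using h)
  exact ⟨p, hp, by simpa using hpj⟩

theorem le_and_succ_le_of_comp_update [Preorder β] (hg : Antitone g) (hg' : Antitone g')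
    (h : ∀ j, g' j = update g j₀ v (σ j)) (hv : v ≤ g j₀) (j : ℕ) :
    g' j ≤ g j ∧ g (j + 1) ≤ g' j := by
  have hle : ∀ i, update g j₀ v i ≤ g i := fun i => by
    rcases eq_or_ne i j₀ with rfl | hi
    · simpa using hv
    · simp [update_of_ne hi]
  constructor
  · obtain ⟨i, hi, hji⟩ :=
      exists_mem_le_of_lt_card (j := j) (t := (Finset.range (j + 1)).map σ.toEmbedding) (by simp)
    obtain ⟨p, hp, rfl⟩ := Finset.mem_map.1 hi
    calc g' j ≤ g' p := hg' (Nat.lt_succ_iff.1 (Finset.mem_range.1 hp))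
      _ = update g j₀ v (σ p) := h p
      _ ≤ g (σ p) := hle _
      _ ≤ g j := hg hji
  · have hcard : j < ((Finset.range (j + 2)).erase j₀).card := by
      have := Finset.pred_card_le_card_erase (s := Finset.range (j + 2)) (a := j₀)
      rw [Finset.card_range] at this
      omega
    obtain ⟨p, hp, hjp⟩ := exists_mem_le_of_lt_card
      (t := ((Finset.range (j + 2)).erase j₀).map σ.symm.toEmbedding) (by rwa [Finset.card_map])
    obtain ⟨i, hi, rfl⟩ := Finset.mem_map.1 hp
    obtain ⟨hij₀, hi⟩ := Finset.mem_erase.1 hi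
    calc g (j + 1) ≤ g i := hg (Nat.lt_succ_iff.1 (Finset.mem_range.1 hi))
      _ = g' (σ.symm i) := by simp [h, update_of_ne hij₀]
      _ ≤ g' j := hg' hjp

lemma eq_comp_symm_update (h : ∀ j, g' j = update g j₀ v (σ j)) (j : ℕ) :
    g j = update g' (σ.symm j₀) (g j₀) (σ.symm j) := by
  rcases eq_or_ne j j₀ with rfl | hj
  · simp
  · rw [update_of_ne (σ.symm.injective.ne hj), h, σ.apply_symm_apply, update_of_ne hj]

theorem Antitone.comp_equiv_eq [PartialOrder β] (hg : Antitone g) (hgσ : Antitone (g ∘ σ)) :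
    g ∘ σ = g := by
  have h : ∀ j, (g ∘ σ) j = update g 0 (g 0) (σ j) := by simp
  funext j
  exact le_antisymm (le_and_succ_le_of_comp_update hg hgσ h le_rfl j).1
    (le_and_succ_le_of_comp_update hgσ hg (eq_comp_symm_update h) (by simp) j).1

end Interlacing

lemma abs_sum_Ico_sub_le_of_interlace {g g' : ℕ → ℝ} (hg0 : 0 ≤ g) (hub : ∀ j, g' j ≤ g j)
    (hlb : ∀ j, g (j + 1) ≤ g' j) (k M : ℕ) :
    |∑ j ∈ Finset.Ico k M, g' j - ∑ j ∈ Finset.Ico k M, g j| ≤ g k := by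
  rcases le_total k M with hkM | hMk
  · rw [abs_sub_comm, abs_of_nonneg (sub_nonneg.2 (Finset.sum_le_sum fun j _ => hub j)),
      ← Finset.sum_sub_distrib]
    calc ∑ j ∈ Finset.Ico k M, (g j - g' j) ≤ ∑ j ∈ Finset.Ico k M, -(g (j + 1) - g j) :=
          Finset.sum_le_sum fun j _ => by linarith [hlb j]
      _ = g k - g M := by rw [Finset.sum_neg_distrib, Finset.sum_Ico_sub g hkM, neg_sub]
      _ ≤ g k := sub_le_self _ (hg0 M)
  · simpa [Finset.Ico_eq_empty_of_le hMk] using hg0 k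

theorem abs_sum_Ico_sub_le_of_comp_update {g g' : ℕ → ℝ} (hg : Antitone g) (hg' : Antitone g')
    (hg0 : 0 ≤ g) (hg0' : 0 ≤ g') {σ : ℕ ≃ ℕ} {j₀ : ℕ} {v : ℝ}
    (h : ∀ j, g' j = update g j₀ v (σ j)) (k M : ℕ) :
    |∑ j ∈ Finset.Ico k M, g' j - ∑ j ∈ Finset.Ico k M, g j| ≤ max (g k) (g' k) := by
  rcases le_total v (g j₀) with hv | hv
  · have hi := le_and_succ_le_of_comp_update hg hg' h hv
    exact (abs_sum_Ico_sub_le_of_interlace hg0 (fun j => (hi j).1) (fun j => (hi j).2) k M).trans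
      (le_max_left _ _)
  · have hi := le_and_succ_le_of_comp_update hg' hg (eq_comp_symm_update h) (by simpa [h] using hv)
    rw [abs_sub_comm]
    exact (abs_sum_Ico_sub_le_of_interlace hg0' (fun j => (hi j).1) (fun j => (hi j).2) k M).trans
      (le_max_right _ _)

lemma tendsto_atTop_of_finite_setOf_le {f : ℕ → ℝ} (h : ∀ R, {j | f j ≤ R}.Finite) :
    Tendsto f atTop atTop := by
  rw [← Nat.cofinite_eq_atTop, tendsto_atTop]
  exact fun R => eventually_cofinite.2 ((h R).subset fun j hj => le_of_lt (not_le.1 hj))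

lemma Filter.Tendsto.update_comp_equiv {β : Type*} [Preorder β] {w : ℕ → β}
    (hw : Tendsto w atTop atTop) (j₀ : ℕ) (v : β) (σ : ℕ ≃ ℕ) :
    Tendsto (fun j => Function.update w j₀ v (σ j)) atTop atTop := by
  have hu : Tendsto (Function.update w j₀ v) atTop atTop :=
    hw.congr' ((eventually_ne_atTop j₀).mono fun j hj => (update_of_ne hj _ _).symm)
  have hσ : Tendsto σ atTop atTop := by
    simpa [Nat.cofinite_eq_atTop] using σ.injective.tendsto_cofinite
  exact hu.comp hσ

lemma abs_tsum_sub_tsum_le {α : Type*} {f f' : α → ℝ} (S : Finset α) (h : ∀ s ∉ S, f' s = f s) :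
    |∑' s, f' s - ∑' s, f s| ≤ ∑ s ∈ S, |f' s - f s| := by
  have hdiff : Summable (f' - f) := summable_of_ne_finset_zero (s := S) fun s hs => by simp [h s hs]
  by_cases hf : Summable f
  · have hf' : Summable f' := by simpa using hf.add hdiff
    rw [← hf'.tsum_sub hf, tsum_eq_sum (s := S) fun s hs => by simp [h s hs]]
    exact Finset.abs_sum_le_sum_abs _ S
  · -- then neither series converges, and both `tsum`s are `0`
    have hf' : ¬ Summable f' := fun hsum => hf (by simpa using hsum.sub hdiff)
    rw [tsum_eq_zero_of_not_summable hf', tsum_eq_zero_of_not_summable hf, sub_zero, abs_zero]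
    exact Finset.sum_nonneg fun s _ => abs_nonneg _

noncomputable def shellSum (s : ℕ) (A : ℝ) (w : ℕ → ℝ) : ℝ :=
  ∑' j : {j : ℕ | A < ((j : ℝ) + 1) ∧ w j ≤ (2 : ℝ) ^ (s + 1)},
    min ((2 : ℝ) ^ (s + 1) - w (j : ℕ)) ((2 : ℝ) ^ s) / ((2 : ℝ) ^ s * A)

lemma dFun_eq_tsum_shellSum (d : ℕ) (a : ℕ → ℝ) (x : ℕ → EuclideanSpace ℝ (Fin d)) :
    dFun d a x = ∑' s, shellSum s (a (s + 1)) (fun j => ‖x j‖) :=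
  rfl

noncomputable def shellWeight (s : ℕ) (A t : ℝ) : ℝ :=
  max (min ((2 : ℝ) ^ (s + 1) - t) ((2 : ℝ) ^ s)) 0 / ((2 : ℝ) ^ s * A)

section ShellWeight

variable {s : ℕ} {A t : ℝ}

lemma shellWeight_nonneg (hA : 0 ≤ A) : 0 ≤ shellWeight s A t :=
  div_nonneg (le_max_right _ _) (by positivity)

lemma shellWeight_le_one_div (hA : 0 ≤ A) : shellWeight s A t ≤ 1 / A :=
  calc shellWeight s A t ≤ (2 : ℝ) ^ s / ((2 : ℝ) ^ s * A) :=
        div_le_div_of_nonneg_right (max_le (min_le_right _ _) (by positivity)) (by positivity)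
    _ = 1 / A := by rw [div_mul_cancel_left₀ (by positivity), one_div]

lemma shellWeight_antitone (hA : 0 ≤ A) : Antitone (shellWeight s A) := fun t₁ t₂ h =>
  div_le_div_of_nonneg_right (max_le_max (min_le_min_right _ (by linarith)) le_rfl)
    (by positivity)

lemma shellWeight_of_lt (ht : (2 : ℝ) ^ (s + 1) < t) : shellWeight s A t = 0 := by
  rw [shellWeight, max_eq_right ((min_le_left _ _).trans (by linarith)), zero_div]

lemma shellWeight_of_le_pow_succ (ht : t ≤ (2 : ℝ) ^ (s + 1)) :
    shellWeight s A t = min ((2 : ℝ) ^ (s + 1) - t) ((2 : ℝ) ^ s) / ((2 : ℝ) ^ s * A) := by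
  rw [shellWeight, max_eq_left (le_min (by linarith) (by positivity))]

lemma shellWeight_of_le (ht : t ≤ (2 : ℝ) ^ s) : shellWeight s A t = 1 / A := by
  rw [shellWeight_of_le_pow_succ (ht.trans (pow_le_pow_right₀ one_le_two s.le_succ)),
    min_eq_right (by rw [pow_succ]; linarith), div_mul_cancel_left₀ (by positivity), one_div]

end ShellWeight

section ShellSum

variable {s : ℕ} {A : ℝ} {w w' : ℕ → ℝ} {σ : ℕ ≃ ℕ} {j₀ : ℕ} {v : ℝ}

lemma shellSum_eq_sum_Ico (hA : 0 ≤ A) {M : ℕ} (hM : ∀ j, M ≤ j → (2 : ℝ) ^ (s + 1) < w j) :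
    shellSum s A w = ∑ j ∈ Finset.Ico ⌊A⌋₊ M, shellWeight s A (w j) := by
  have hfloor : ∀ j : ℕ, A < (j : ℝ) + 1 ↔ ⌊A⌋₊ ≤ j := fun j => by
    rw [← Nat.lt_succ_iff, Nat.floor_lt hA]; push_cast; rfl
  rw [shellSum, tsum_subtype _ fun j : ℕ =>
      min ((2 : ℝ) ^ (s + 1) - w j) ((2 : ℝ) ^ s) / ((2 : ℝ) ^ s * A),
    tsum_eq_sum (s := Finset.Ico ⌊A⌋₊ M)]
  · refine Finset.sum_congr rfl fun j hj => ?_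
    simp only [Set.indicator_apply, Set.mem_ofPred_eq, hfloor]
    by_cases hwj : w j ≤ (2 : ℝ) ^ (s + 1)
    · rw [if_pos ⟨(Finset.mem_Ico.1 hj).1, hwj⟩, shellWeight_of_le_pow_succ hwj]
    · rw [if_neg fun h => hwj h.2, shellWeight_of_lt (not_le.1 hwj)]
  · intro j hj
    simp only [Set.indicator_apply, Set.mem_ofPred_eq, hfloor]
    rw [if_neg]
    exact fun ⟨hAj, hwj⟩ => hj (Finset.mem_Ico.2 ⟨hAj, not_le.1 fun hMj => (hM j hMj).not_ge hwj⟩)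

lemma exists_shellSum_eq_sum_Ico (hA : 0 ≤ A) (hw : Tendsto w atTop atTop)
    (h : ∀ j, w' j = update w j₀ v (σ j)) :
    ∃ M, shellSum s A w = ∑ j ∈ Finset.Ico ⌊A⌋₊ M, shellWeight s A (w j) ∧
      shellSum s A w' = ∑ j ∈ Finset.Ico ⌊A⌋₊ M, shellWeight s A (w' j) := by
  have hw' : Tendsto w' atTop atTop := by
    rw [show w' = _ from funext h]
    exact hw.update_comp_equiv j₀ v σ
  obtain ⟨M, hM⟩ := eventually_atTop.1
    ((hw.eventually_gt_atTop ((2 : ℝ) ^ (s + 1))).and (hw'.eventually_gt_atTop _))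
  exact ⟨M, shellSum_eq_sum_Ico hA fun j hj => (hM j hj).1,
    shellSum_eq_sum_Ico hA fun j hj => (hM j hj).2⟩

theorem abs_shellSum_sub_le (hA : 0 ≤ A) (hw : Monotone w) (hw' : Monotone w')
    (hwt : Tendsto w atTop atTop) (h : ∀ j, w' j = update w j₀ v (σ j)) :
    |shellSum s A w' - shellSum s A w| ≤ 1 / A := by
  obtain ⟨M, hM, hM'⟩ := exists_shellSum_eq_sum_Ico (s := s) hA hwt h
  rw [hM, hM']
  refine (abs_sum_Ico_sub_le_of_comp_update ((shellWeight_antitone hA).comp_monotone hw)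
    ((shellWeight_antitone hA).comp_monotone hw') (fun j => shellWeight_nonneg hA)
    (fun j => shellWeight_nonneg hA) (σ := σ) (j₀ := j₀) (v := shellWeight s A v)
    (fun j => ?_) _ M).trans
    (max_le (shellWeight_le_one_div hA) (shellWeight_le_one_div hA))
  rw [comp_apply, h j]
  exact apply_update (fun _ => shellWeight s A) w j₀ v (σ j)

theorem shellSum_eq_of_shellWeight_eq (hA : 0 ≤ A) (hw : Monotone w) (hw' : Monotone w')
    (hwt : Tendsto w atTop atTop) (h : ∀ j, w' j = update w j₀ v (σ j))
    (hv : shellWeight s A v = shellWeight s A (w j₀)) :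
    shellSum s A w' = shellSum s A w := by
  obtain ⟨M, hM, hM'⟩ := exists_shellSum_eq_sum_Ico (s := s) hA hwt h
  have hcomp : shellWeight s A ∘ w' = (shellWeight s A ∘ w) ∘ σ := by
    funext j
    rw [comp_apply, h j]
    rcases eq_or_ne (σ j) j₀ with hj | hj
    · simp [hj, hv]
    · simp [update_of_ne hj]
  have hsorted := Antitone.comp_equiv_eq ((shellWeight_antitone hA).comp_monotone hw)
    (hcomp ▸ (shellWeight_antitone hA).comp_monotone hw')
  rw [hM, hM']
  exact Finset.sum_congr rfl fun j _ => congrFun (hcomp.trans hsorted) j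

end ShellSum

lemma shellWeight_eq_of_far {r s : ℕ} {A t u : ℝ}
    (ht : t ≤ (2 : ℝ) ^ r ∧ (2 ≤ r → (2 : ℝ) ^ (r - 1) < t))
    (hu : u ≤ (2 : ℝ) ^ (r + 1) ∧ (2 ≤ r → (2 : ℝ) ^ (r - 2) < u))
    (hs : s + 3 ≤ r ∨ r + 1 ≤ s) : shellWeight s A u = shellWeight s A t := by
  have hpow : ∀ {k l : ℕ}, k ≤ l → (2 : ℝ) ^ k ≤ 2 ^ l := pow_le_pow_right₀ one_le_two
  rcases hs with hs | hs
  · have hr : 2 ≤ r := by omega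
    rw [shellWeight_of_lt ((hpow (by omega)).trans_lt (hu.2 hr)),
      shellWeight_of_lt ((hpow (by omega)).trans_lt (ht.2 hr))]
  · rw [shellWeight_of_le (hu.1.trans (hpow (by omega))),
      shellWeight_of_le (ht.1.trans (hpow (by omega)))]

lemma sum_one_div_shells_le {a : ℕ → ℝ} (ha : ∀ m, 0 < a m) (r : ℕ) :
    ∑ s ∈ ({r - 2, r - 1, r} : Finset ℕ), 1 / a (s + 1) ≤
      1 / a (r - 1) + 1 / a r + 1 / a (r + 1) := by
  -- for `r ≤ 1` the truncated subtractions make indices collide, leaving a spare `1 / a 0`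
  rcases r with _ | _ | r
  · simpa using (ha 0).le
  · simpa using (ha 0).le
  · rw [Finset.sum_insert (by simp; omega), Finset.sum_insert (by simp), Finset.sum_singleton]
    simp [add_assoc]

theorem stmt_19_general (d : ℕ) (κ : ℝ) (n : ℕ) (hn : 1 ≤ n)
    (a : ℕ → ℝ) (ha : ∀ r : ℕ, a r = (n : ℝ) * 2 ^ (((d : ℝ) + κ) * r))
    -- `x` lists the points of ξ, `x'` lists the points of ξ^{x_{j₀}, y} = ξ - δ_{x_{j₀}} + δ_y,
    -- both with nondecreasing norms, and ξ is locally finite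
    (x x' : ℕ → EuclideanSpace ℝ (Fin d))
    (hordx : ∀ j : ℕ, ‖x j‖ ≤ ‖x (j + 1)‖) (hordx' : ∀ j : ℕ, ‖x' j‖ ≤ ‖x' (j + 1)‖)
    (hlocx : ∀ R : ℝ, {j : ℕ | ‖x j‖ ≤ R}.Finite)
    (j₀ r : ℕ)
    -- x_{j₀} ∈ A_r = U_{2^r} \ U_{2^{r-1}} (with A_1 = U_2)
    (hxj : ‖x j₀‖ ≤ (2 : ℝ) ^ r ∧ (2 ≤ r → (2 : ℝ) ^ (r - 1) < ‖x j₀‖))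
    -- y ∈ A_{r-1} ∪ A_r ∪ A_{r+1}
    (y : EuclideanSpace ℝ (Fin d))
    (hy : ‖y‖ ≤ (2 : ℝ) ^ (r + 1) ∧ (2 ≤ r → (2 : ℝ) ^ (r - 2) < ‖y‖))
    -- x' is a reordering of x with the particle at x_{j₀} moved to y
    (σ : ℕ ≃ ℕ) (hσ : ∀ j : ℕ, x' j = Function.update x j₀ y (σ j)) :
    |dFun d a x' - dFun d a x| ≤ 1 / a (r - 1) + 1 / a r + 1 / a (r + 1) := by
  have ha_pos : ∀ m, 0 < a m := fun m => by
    have : (0 : ℝ) < n := by exact_mod_cast hn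
    rw [ha m]
    positivity
  have hnorm : ∀ j, ‖x' j‖ = update (fun i => ‖x i‖) j₀ ‖y‖ (σ j) := fun j => by
    rw [hσ j]
    exact apply_update (fun _ => norm) x j₀ y (σ j)
  have hmono := monotone_nat_of_le_succ hordx
  have hmono' := monotone_nat_of_le_succ hordx'
  have htend := tendsto_atTop_of_finite_setOf_le hlocx
  simp only [dFun_eq_tsum_shellSum]
  refine (abs_tsum_sub_tsum_le {r - 2, r - 1, r} fun s hs => ?_).trans ?_
  · simp only [Finset.mem_insert, Finset.mem_singleton] at hs
    exact shellSum_eq_of_shellWeight_eq (ha_pos _).le hmono hmono' htend hnorm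
      (shellWeight_eq_of_far hxj hy (by omega))
  · calc _ ≤ ∑ s ∈ ({r - 2, r - 1, r} : Finset ℕ), 1 / a (s + 1) :=
          Finset.sum_le_sum fun s _ =>
            abs_shellSum_sub_le (ha_pos _).le hmono hmono' htend hnorm
      _ ≤ _ := sum_one_div_shells_le ha_pos r

theorem stmt_19 (d : ℕ) (hd : 1 ≤ d) (κ : ℝ) (hκ : 0 ≤ κ) (n : ℕ) (hn : 1 ≤ n)
    (a : ℕ → ℝ) (ha : ∀ r : ℕ, a r = (n : ℝ) * 2 ^ (((d : ℝ) + κ) * r))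
    -- `x` lists the points of ξ, `x'` lists the points of ξ^{x_{j₀}, y} = ξ - δ_{x_{j₀}} + δ_y,
    -- both with nondecreasing norms, and ξ is locally finite
    (x x' : ℕ → EuclideanSpace ℝ (Fin d))
    (hordx : ∀ j : ℕ, ‖x j‖ ≤ ‖x (j + 1)‖) (hordx' : ∀ j : ℕ, ‖x' j‖ ≤ ‖x' (j + 1)‖)
    (hlocx : ∀ R : ℝ, {j : ℕ | ‖x j‖ ≤ R}.Finite)
    (j₀ r : ℕ) (hr : 1 ≤ r)
    -- x_{j₀} ∈ A_r = U_{2^r} \ U_{2^{r-1}} (with A_1 = U_2)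
    (hxj : ‖x j₀‖ ≤ (2 : ℝ) ^ r ∧ (2 ≤ r → (2 : ℝ) ^ (r - 1) < ‖x j₀‖))
    -- y ∈ A_{r-1} ∪ A_r ∪ A_{r+1}
    (y : EuclideanSpace ℝ (Fin d))
    (hy : ‖y‖ ≤ (2 : ℝ) ^ (r + 1) ∧ (2 ≤ r → (2 : ℝ) ^ (r - 2) < ‖y‖))
    -- x' is a reordering of x with the particle at x_{j₀} moved to y
    (σ : ℕ ≃ ℕ) (hσ : ∀ j : ℕ, x' j = Function.update x j₀ y (σ j)) :
    |dFun d a x' - dFun d a x| ≤ 1 / a (r - 1) + 1 / a r + 1 / a (r + 1) :=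
  stmt_19_general d κ n hn a ha x x' hordx hordx' hlocx j₀ r hxj y hy σ hσ
end
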